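/- arXiv:1606.04125 — 2 statements merged into one kernel-verified Lean document; each statement's English description precedes it below -/
import Mathlib

section
/- Let f be a consensus function on the n-cube Q_n. Then f equals the center function Cen if and only if f satisfies the Translation property (T) and for every profile π: the all-zeros vertex 𝟎 belongs to f(π) if and only if ‖π‖ ≤ ‖π ⊕ u‖ for every vertex u of Q_n. -/
/-- A vertex of the n-cube `Q_n`: an element of `{0,1}^n`. -/
abbrev Vertex (n : ℕ) := Fin n → Bool

/-- Coordinatewise addition modulo 2 (`u ⊕ v`). -/
def vxor {n : ℕ} (u v : Vertex n) : Vertex n := fun i => xor (u i) (v i)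

/-- A profile: a nonempty finite sequence of vertices of `Q_n`. -/
def Profile (n : ℕ) := { l : List (Vertex n) // l ≠ [] }

/-- Translation of a profile: `π ⊕ v = (x₁ ⊕ v, …, x_k ⊕ v)`. -/
def pxor {n : ℕ} (π : Profile n) (v : Vertex n) : Profile n :=
  ⟨π.1.map (fun x => vxor x v), by simpa using π.2⟩

/-- The Translation property (T) for a consensus function. -/
def Translation {n : ℕ} (f : Profile n → Set (Vertex n)) : Prop :=
  ∀ (π : Profile n) (u v : Vertex n), u ∈ f π → vxor u v ∈ f (pxor π v)

/-- Hamming distance on the n-cube. -/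
def cubeDist {n : ℕ} (u v : Vertex n) : ℕ := hammingDist u v

/-- The all-zeros vertex `𝟎`. -/
def zeroV (n : ℕ) : Vertex n := fun _ => false

/-- `‖u‖ = d(𝟎,u)`, the number of ones in `u`. -/
def vnorm {n : ℕ} (u : Vertex n) : ℕ := cubeDist (zeroV n) u

/-- `‖π‖ = max{‖x₁‖,…,‖x_k‖}`. -/
def pnorm {n : ℕ} (π : Profile n) : ℕ := (π.1.map vnorm).foldr max 0

/-- Eccentricity `e(x, π) = max_j d(x, x_j)`. -/
def ecc {n : ℕ} (π : Profile n) (x : Vertex n) : ℕ :=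
  (π.1.map (fun y => cubeDist x y)).foldr max 0

/-- The center function. -/
def Cen {n : ℕ} (π : Profile n) : Set (Vertex n) :=
  {x | ∀ y : Vertex n, ecc π x ≤ ecc π y}

/-- Status `S_π(x) = Σ_j d(x, x_j)`. -/
def status {n : ℕ} (π : Profile n) (x : Vertex n) : ℕ :=
  (π.1.map (fun y => cubeDist x y)).sum

/-- The median function. -/
def Med {n : ℕ} (π : Profile n) : Set (Vertex n) :=
  {x | ∀ y : Vertex n, status π x ≤ status π y}

/-- The anti-median function. -/
def AM {n : ℕ} (π : Profile n) : Set (Vertex n) :=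
  {x | ∀ y : Vertex n, status π y ≤ status π x}

/-- `Σ_{j=1}^k xᵢ^j`: the number of profile entries with a 1 in coordinate `i`. -/
def cnt {n : ℕ} (π : Profile n) (i : Fin n) : ℕ :=
  (π.1.map (fun x => if x i then 1 else 0)).sum

/-- The majority vertex `Maj(π)`: `wᵢ = 1` iff `Σ_j xᵢ^j > k/2`. -/
def Maj {n : ℕ} (π : Profile n) : Vertex n :=
  fun i => decide (π.1.length < 2 * cnt π i)

/-- The minority vertex `Min(π)`: `mᵢ = 1` iff `Σ_j xᵢ^j < k/2`. -/
def MinV {n : ℕ} (π : Profile n) : Vertex n :=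
  fun i => decide (2 * cnt π i < π.1.length)

/-- The Condorcet score `Cs(π)`. -/
def Cs {n : ℕ} (π : Profile n) : ℕ :=
  (Finset.univ.filter (fun i : Fin n => 2 * cnt π i = π.1.length)).card

/-- The Majority property (Maj). -/
def MajProp {n : ℕ} (f : Profile n → Set (Vertex n)) : Prop :=
  ∀ π : Profile n, Maj π ∈ f π

/-- The Minority property (Min). -/
def MinProp {n : ℕ} (f : Profile n → Set (Vertex n)) : Prop :=
  ∀ π : Profile n, MinV π ∈ f π

/-- The Restricted Range property (RR): `|f(π)| ≤ 2^{Cs(π)}`. -/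
def RestrictedRange {n : ℕ} (f : Profile n → Set (Vertex n)) : Prop :=
  ∀ π : Profile n, (f π).ncard ≤ 2 ^ Cs π

/-- The `ℓ_p` status `ℓ_pS_π(x) = Σ_j d(x,x_j)^p`. -/
noncomputable def lpStatus {n : ℕ} (p : ℝ) (π : Profile n) (x : Vertex n) : ℝ :=
  (π.1.map (fun y => (cubeDist x y : ℝ) ^ p)).sum

/-- The `ℓ_p`-function. -/
noncomputable def lpFun {n : ℕ} (p : ℝ) (π : Profile n) : Set (Vertex n) :=
  {x | ∀ y : Vertex n, lpStatus p π x ≤ lpStatus p π y}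

/-- The `p`-Characteristic `Char_p(π) = Σ_j ‖x_j‖^p`. -/
noncomputable def Charp {n : ℕ} (p : ℝ) (π : Profile n) : ℝ :=
  (π.1.map (fun x => (vnorm x : ℝ) ^ p)).sum

/-- Concatenation of profiles `π₁π₂`. -/
def pconcat {n : ℕ} (π₁ π₂ : Profile n) : Profile n :=
  ⟨π₁.1 ++ π₂.1, by simp [π₁.2]⟩

/-- The profile of length one consisting of the single vertex `x`. -/
def singleP {n : ℕ} (x : Vertex n) : Profile n := ⟨[x], by simp⟩

/-- The Consistency property (C). -/
def Consistency {n : ℕ} (f : Profile n → Set (Vertex n)) : Prop :=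
  ∀ π₁ π₂ : Profile n, (f π₁ ∩ f π₂).Nonempty → f (pconcat π₁ π₂) = f π₁ ∩ f π₂

/-! Eccentricity commutes with translations: `e(x, π ⊕ v) = e(x ⊕ v, π)`, and in particular
`‖π ⊕ u‖ = e(u, π)`. So the condition on `π` says exactly that `𝟎 ∈ Cen(π)`, and under (T) the whole
set `f(π)` is determined by whether `𝟎 ∈ f(π ⊕ u)` for each `u`, since `u ∈ f(π) ↔ 𝟎 ∈ f(π ⊕ u)`. -/

section Translation

variable {n : ℕ}

lemma vxor_assoc (u v w : Vertex n) : vxor (vxor u v) w = vxor u (vxor v w) := by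
  funext i; simp [vxor]

lemma vxor_self (u : Vertex n) : vxor u u = zeroV n := by
  funext i; simp [vxor, zeroV]

lemma vxor_zeroV (u : Vertex n) : vxor u (zeroV n) = u := by
  funext i; simp [vxor, zeroV]

lemma zeroV_vxor (u : Vertex n) : vxor (zeroV n) u = u := by
  funext i; simp [vxor, zeroV]

lemma vxor_vxor_cancel_right (u v : Vertex n) : vxor (vxor u v) v = u := by
  rw [vxor_assoc, vxor_self, vxor_zeroV]

lemma cubeDist_vxor_right (x y v : Vertex n) :
    cubeDist x (vxor y v) = cubeDist (vxor x v) y := by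
  unfold cubeDist hammingDist vxor
  congr 1
  apply Finset.filter_congr
  intro i _
  cases x i <;> cases y i <;> cases v i <;> simp

lemma pxor_pxor (π : Profile n) (u v : Vertex n) :
    pxor (pxor π u) v = pxor π (vxor u v) :=
  Subtype.ext <| by simp only [pxor, List.map_map, Function.comp_def, vxor_assoc]

lemma pxor_zeroV (π : Profile n) : pxor π (zeroV n) = π :=
  Subtype.ext <| by simp only [pxor, vxor_zeroV, List.map_id']

lemma pxor_pxor_cancel_right (π : Profile n) (u : Vertex n) : pxor (pxor π u) u = π := by
  rw [pxor_pxor, vxor_self, pxor_zeroV]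

lemma ecc_pxor (π : Profile n) (x v : Vertex n) : ecc (pxor π v) x = ecc π (vxor x v) := by
  simp only [ecc, pxor, List.map_map, Function.comp_def, cubeDist_vxor_right]

lemma pnorm_eq_ecc_zeroV (π : Profile n) : pnorm π = ecc π (zeroV n) := rfl

lemma pnorm_pxor (π : Profile n) (u : Vertex n) : pnorm (pxor π u) = ecc π u := by
  rw [pnorm_eq_ecc_zeroV, ecc_pxor, zeroV_vxor]

lemma zeroV_mem_Cen_iff (π : Profile n) :
    zeroV n ∈ Cen π ↔ ∀ u : Vertex n, pnorm π ≤ pnorm (pxor π u) := by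
  simp only [pnorm_pxor]
  rfl

lemma translation_Cen : Translation (Cen (n := n)) := by
  intro π u v hu y
  simp only [Cen, Set.mem_ofPred_eq, ecc_pxor, vxor_vxor_cancel_right] at hu ⊢
  exact hu _

lemma Translation.mem_iff_zeroV_mem {f : Profile n → Set (Vertex n)} (hf : Translation f)
    (π : Profile n) (u : Vertex n) : u ∈ f π ↔ zeroV n ∈ f (pxor π u) := by
  refine ⟨fun h => vxor_self u ▸ hf π u u h, fun h => ?_⟩
  simpa only [zeroV_vxor, pxor_pxor_cancel_right] using hf (pxor π u) (zeroV n) u h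

end Translation

theorem stmt2_general {n : ℕ} (f : Profile n → Set (Vertex n)) :
    f = Cen ↔
      (Translation f ∧
        ∀ π : Profile n, (zeroV n ∈ f π ↔ ∀ u : Vertex n, pnorm π ≤ pnorm (pxor π u))) := by
  constructor
  · rintro rfl
    exact ⟨translation_Cen, zeroV_mem_Cen_iff⟩
  · rintro ⟨hT, hZero⟩
    funext π
    ext u
    rw [hT.mem_iff_zeroV_mem, translation_Cen.mem_iff_zeroV_mem, hZero, zeroV_mem_Cen_iff]

/-- `f = Cen` iff `f` satisfies (T) and for every profile `π`,
`𝟎 ∈ f(π)` iff `‖π‖ ≤ ‖π ⊕ u‖` for all `u`. -/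
theorem stmt2 {n : ℕ} (f : Profile n → Set (Vertex n))
    (hf : ∀ π : Profile n, (f π).Nonempty) :
    f = Cen ↔
      (Translation f ∧
        ∀ π : Profile n, (zeroV n ∈ f π ↔ ∀ u : Vertex n, pnorm π ≤ pnorm (pxor π u))) :=
  stmt2_general f
end

section
/- For every profile π on the n-cube Q_n, the median set satisfies |Med(π)| = 2^{Cs(π)}, where Cs(π) is the Condorcet score of π. In particular, Med satisfies the Restricted Range property (RR). -/
/-!
The status is a sum of independent coordinate costs: coordinate `i` of `x` contributes the
number of entries disagreeing with `x i`. A vertex is a median iff each coordinate minimizes its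
own cost. The two costs of a coordinate add up to `k`, so they are equal exactly when the
coordinate is a Condorcet tie (both bits are optimal), and otherwise the majority bit is the
unique optimum. Hence `Med(π)` is a product of `Cs(π)` two-element sets and singletons.
-/

def minimizers {α M : Type*} [LE M] (f : α → M) : Set α :=
  {x | ∀ y, f x ≤ f y}

section Minimizers

variable {ι α M : Type*} [Fintype ι] [DecidableEq ι]
  [AddCommMonoid M] [LinearOrder M] [IsOrderedCancelAddMonoid M]

theorem minimizers_sum_eq_pi (c : ι → α → M) :
    minimizers (fun x : ι → α => ∑ i, c i (x i)) = Set.univ.pi fun i => minimizers (c i) := by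
  ext x
  simp only [minimizers, Set.mem_ofPred_eq, Set.mem_univ_pi]
  constructor
  · intro hx i b
    by_contra! hb
    have hlt : ∑ j, c j (Function.update x i b j) < ∑ j, c j (x j) := by
      refine Finset.sum_lt_sum (fun j _ => ?_) ⟨i, Finset.mem_univ i, by simpa using hb⟩
      rcases eq_or_ne j i with rfl | hj
      · simpa using hb.le
      · simp [hj]
    exact (hlt.trans_le (hx _)).false
  · exact fun hx y => Finset.sum_le_sum fun i _ => hx i (y i)

end Minimizers

theorem Set.ncard_univ_pi {ι α : Type*} [Fintype ι] (t : ι → Set α) :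
    (Set.univ.pi t).ncard = ∏ i, (t i).ncard := by
  simp only [← Nat.card_coe_set_eq]
  rw [Nat.card_congr (Equiv.Set.univPi t), Nat.card_pi]

theorem List.sum_map_finset_sum {β ι M : Type*} [AddCommMonoid M] (l : List β) (s : Finset ι)
    (f : β → ι → M) : (l.map fun b => ∑ i ∈ s, f b i).sum = ∑ i ∈ s, (l.map fun b => f b i).sum := by
  induction l with
  | nil => simp
  | cons b l ih => simp [ih, Finset.sum_add_distrib]

section CoordCost

variable {n : ℕ}

def coordCost (π : Profile n) (i : Fin n) (b : Bool) : ℕ :=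
  (π.1.map fun y => if b ≠ y i then 1 else 0).sum

theorem status_eq_sum_coordCost (π : Profile n) (x : Vertex n) :
    status π x = ∑ i, coordCost π i (x i) := by
  have hdist : ∀ y : Vertex n, cubeDist x y = ∑ i, if x i ≠ y i then 1 else 0 := fun y => by
    simp [cubeDist, hammingDist, Finset.card_filter]
  simp only [status, hdist, coordCost]
  exact List.sum_map_finset_sum _ _ _

theorem coordCost_false (π : Profile n) (i : Fin n) : coordCost π i false = cnt π i := by
  unfold coordCost cnt
  congr 1
  exact List.map_congr_left fun y _ => by cases y i <;> rfl

theorem coordCost_true_add_false (π : Profile n) (i : Fin n) :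
    coordCost π i true + coordCost π i false = π.1.length := by
  have hone : ∀ y : Vertex n,
      ((if true ≠ y i then 1 else 0) + if false ≠ y i then 1 else 0) = 1 := fun y => by
    cases y i <;> rfl
  unfold coordCost
  rw [← List.sum_map_add, List.map_congr_left fun y _ => hone y]
  simp

theorem ncard_minimizers_coordCost (π : Profile n) (i : Fin n) :
    (minimizers (coordCost π i)).ncard = if 2 * cnt π i = π.1.length then 2 else 1 := by
  have hsum := coordCost_true_add_false π i
  have hfalse := coordCost_false π i
  split_ifs with htie
  · have huniv : minimizers (coordCost π i) = Set.univ :=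
      Set.eq_univ_of_forall fun b b' => by cases b <;> cases b' <;> omega
    simp [huniv]
  · rw [Set.ncard_eq_one]
    refine ⟨Maj π i, Set.ext fun b => ?_⟩
    simp only [minimizers, Maj, Set.mem_ofPred_eq, Set.mem_singleton_iff, Bool.forall_bool]
    cases b <;> simp <;> omega

end CoordCost

/-- For every profile `π` on `Q_n`, `|Med(π)| = 2^{Cs(π)}`; in particular, `Med`
satisfies the Restricted Range property (RR). -/
theorem stmt13 {n : ℕ} :
    (∀ π : Profile n, (Med π).ncard = 2 ^ Cs π) ∧ RestrictedRange (Med (n := n)) := by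
  have hcard : ∀ π : Profile n, (Med π).ncard = 2 ^ Cs π := fun π => by
    have hmed : Med π = Set.univ.pi fun i => minimizers (coordCost π i) := by
      rw [← minimizers_sum_eq_pi]
      exact congrArg minimizers (funext (status_eq_sum_coordCost π))
    rw [hmed, Set.ncard_univ_pi]
    simp only [ncard_minimizers_coordCost, Finset.prod_ite, Finset.prod_const, one_pow,
      mul_one]
    rfl
  exact ⟨hcard, fun π => (hcard π).le⟩
end
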